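/- arXiv:2312.14849 — 6 statements merged into one kernel-verified Lean document; each statement's English description precedes it below -/
import Mathlib

section
/- Let p be a probability density on ℝ^n, σ > 0, and let φ_σ(v) = (2πσ²)^{−n/2} exp(−‖v‖²/(2σ²)) denote the Gaussian kernel. Define the smoothed density p_σ(ũ) = ∫ φ_σ(ũ − u) p(u) du and assume p_σ(ũ) > 0 for all ũ, so that the score ∇ log p_σ is defined (p_σ is smooth). Let s : ℝ^n → ℝ^n be measurable with ∫∫ ‖s(ũ)‖² φ_σ(ũ−u) p(u) dũ du < ∞, and assume ∫ ‖∇ log p_σ(ũ)‖² p_σ(ũ) dũ < ∞ and ∫∫ ‖(u−ũ)/σ²‖² φ_σ(ũ−u) p(u) dũ du < ∞. Then E_{ũ∼p_σ}[ ‖s(ũ) − ∇ log p_σ(ũ)‖² ] = E_{u∼p} E_{ũ∼N(u,σ²I)}[ ‖s(ũ) − (u−ũ)/σ²‖² ] + C, where C = E_{ũ∼p_σ}[‖∇ log p_σ(ũ)‖²] − E_{u,ũ}[‖(u−ũ)/σ²‖²] does not depend on s. In particular, the explicit score matching objective and the denoising score matching objective have the same minimizers in s. -/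
/-!
Expand both squares. The `‖s‖²` terms agree because `pσ` is the `ũ`-marginal of the joint density
`φσ (ũ - u) p u`. The cross terms agree because differentiating under the integral sign gives
`pσ ũ • ∇ log pσ ũ = ∇ pσ ũ = ∫ φσ (ũ - u) p u • (u - ũ) / σ² du`:
the score of `pσ` is the conditional expectation of the conditional score.
-/

open MeasureTheory Real InnerProductSpace
open scoped Gradient

section ScoreMatching

variable {γ E : Type*} [MeasurableSpace γ] {ρ : Measure γ}
  [NormedAddCommGroup E] [InnerProductSpace ℝ E]

theorem MeasureTheory.Integrable.inner_mul_of_norm_sq_mul {f g : γ → E} {w : γ → ℝ}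
    (hf_int : Integrable (fun z => ‖f z‖ ^ 2 * w z) ρ)
    (hg_int : Integrable (fun z => ‖g z‖ ^ 2 * w z) ρ) (hw : 0 ≤ w)
    (hf : AEStronglyMeasurable f ρ) (hg : AEStronglyMeasurable g ρ)
    (hw_meas : AEStronglyMeasurable w ρ) :
    Integrable (fun z => ⟪f z, g z⟫_ℝ * w z) ρ := by
  refine ((hf_int.add hg_int).div_const 2).mono' ((hf.inner hg).mul hw_meas) (ae_of_all _ ?_)
  intro z
  have amgm : |⟪f z, g z⟫_ℝ| ≤ (‖f z‖ ^ 2 + ‖g z‖ ^ 2) / 2 :=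
    (abs_real_inner_le_norm _ _).trans (by nlinarith [sq_nonneg (‖f z‖ - ‖g z‖)])
  rw [Real.norm_eq_abs, abs_mul, abs_of_nonneg (hw z)]
  calc |⟪f z, g z⟫_ℝ| * w z ≤ (‖f z‖ ^ 2 + ‖g z‖ ^ 2) / 2 * w z :=
        mul_le_mul_of_nonneg_right amgm (hw z)
    _ = _ := by simp only [Pi.add_apply]; ring

theorem integral_norm_sub_sq_mul {f g : γ → E} {w : γ → ℝ}
    (hf_int : Integrable (fun z => ‖f z‖ ^ 2 * w z) ρ)
    (hfg_int : Integrable (fun z => ⟪f z, g z⟫_ℝ * w z) ρ)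
    (hg_int : Integrable (fun z => ‖g z‖ ^ 2 * w z) ρ) :
    ∫ z, ‖f z - g z‖ ^ 2 * w z ∂ρ
      = ∫ z, ‖f z‖ ^ 2 * w z ∂ρ - 2 * ∫ z, ⟪f z, g z⟫_ℝ * w z ∂ρ
        + ∫ z, ‖g z‖ ^ 2 * w z ∂ρ := by
  have expand : ∀ z, ‖f z - g z‖ ^ 2 * w z
      = ‖f z‖ ^ 2 * w z - 2 * (⟪f z, g z⟫_ℝ * w z) + ‖g z‖ ^ 2 * w z := fun z => by
    rw [norm_sub_sq_real]; ring
  simp_rw [expand]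
  have hfg_int' := hfg_int.const_mul 2
  rw [integral_add (by exact hf_int.sub hfg_int') hg_int, integral_sub hf_int hfg_int',
    integral_const_mul]

variable {α β : Type*} [MeasurableSpace α] [MeasurableSpace β] {μ : Measure α} {ν : Measure β}
  [SFinite μ] [SFinite ν] [CompleteSpace E]

/-- `w` plays the joint density of `(u, x)`, `q` its `x`-marginal, `g` the conditional score and
`S` the marginal score, which `hS` identifies with the conditional expectation of `g`. -/
theorem integral_norm_sub_sq_mul_marginal_eq {w : α × β → ℝ} {q : β → ℝ} {S : β → E}
    {g : α × β → E} {s : β → E} (hw : 0 ≤ w) (hw_meas : AEStronglyMeasurable w (μ.prod ν))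
    (hq : ∀ x, q x = ∫ u, w (u, x) ∂μ) (hS : ∀ x, q x • S x = ∫ u, w (u, x) • g (u, x) ∂μ)
    (hwg_int : ∀ x, Integrable (fun u => w (u, x) • g (u, x)) μ)
    (hs : AEStronglyMeasurable s ν) (hg : AEStronglyMeasurable g (μ.prod ν))
    (hs_int : Integrable (fun z => ‖s z.2‖ ^ 2 * w z) (μ.prod ν))
    (hg_int : Integrable (fun z => ‖g z‖ ^ 2 * w z) (μ.prod ν))
    (hS_int : Integrable (fun x => ‖S x‖ ^ 2 * q x) ν) :
    ∫ x, ‖s x - S x‖ ^ 2 * q x ∂ν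
      = ∫ z, ‖s z.2 - g z‖ ^ 2 * w z ∂(μ.prod ν)
        + (∫ x, ‖S x‖ ^ 2 * q x ∂ν - ∫ z, ‖g z‖ ^ 2 * w z ∂(μ.prod ν)) := by
  have hsg_int : Integrable (fun z => ⟪s z.2, g z⟫_ℝ * w z) (μ.prod ν) :=
    hs_int.inner_mul_of_norm_sq_mul hg_int hw hs.comp_snd hg hw_meas
  have marginal_sq : ∀ x, ‖s x‖ ^ 2 * q x = ∫ u, ‖s x‖ ^ 2 * w (u, x) ∂μ := fun x => by
    rw [hq, integral_const_mul]
  have marginal_inner : ∀ x, ⟪s x, S x⟫_ℝ * q x = ∫ u, ⟪s x, g (u, x)⟫_ℝ * w (u, x) ∂μ :=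
    fun x => by
      rw [mul_comm, ← real_inner_smul_right, hS, ← integral_inner (hwg_int x)]
      simp_rw [real_inner_smul_right, mul_comm]
  have hsq_int : Integrable (fun x => ‖s x‖ ^ 2 * q x) ν :=
    hs_int.integral_prod_right.congr (ae_of_all _ fun x => (marginal_sq x).symm)
  have hsS_int : Integrable (fun x => ⟪s x, S x⟫_ℝ * q x) ν :=
    hsg_int.integral_prod_right.congr (ae_of_all _ fun x => (marginal_inner x).symm)
  rw [integral_norm_sub_sq_mul hsq_int hsS_int hS_int,
    integral_norm_sub_sq_mul hs_int hsg_int hg_int,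
    integral_prod_symm _ hs_int, integral_prod_symm _ hsg_int]
  simp_rw [← marginal_sq, ← marginal_inner]
  ring

end ScoreMatching

theorem HasGradientAt.smul_gradient_log {F : Type*} [NormedAddCommGroup F]
    [InnerProductSpace ℝ F] [CompleteSpace F] {f : F → ℝ} {f' x : F} (hf : HasGradientAt f f' x)
    (hx : f x ≠ 0) :
    f x • ∇ (fun y => log (f y)) x = f' := by
  have hlog : HasGradientAt (fun y => log (f y)) ((f x)⁻¹ • f') x := by
    rw [hasGradientAt_iff_hasFDerivAt, map_smul]
    exact (hasGradientAt_iff_hasFDerivAt.1 hf).log hx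
  rw [hlog.gradient, smul_inv_smul₀ hx]

theorem hasGradientAt_integral_sub_mul {E : Type*} [NormedAddCommGroup E]
    [InnerProductSpace ℝ E] [FiniteDimensional ℝ E] [MeasurableSpace E] [BorelSpace E]
    {μ : Measure E} {k : E → ℝ} {k' : E → E} {p : E → ℝ} {C : ℝ}
    (hk : ∀ v, HasGradientAt k (k' v) v) (hk' : Continuous k') (hk'_le : ∀ v, ‖k' v‖ ≤ C)
    (hp : Integrable p μ) {x₀ : E} (hint : Integrable (fun u => k (x₀ - u) * p u) μ) :
    HasGradientAt (fun x => ∫ u, k (x - u) * p u ∂μ) (∫ u, p u • k' (x₀ - u) ∂μ) x₀ := by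
  have hk_cont : Continuous k := continuous_iff_continuousAt.2 fun v => (hk v).continuousAt
  have hderiv : ∀ u x,
      HasFDerivAt (fun x => k (x - u) * p u) (p u • toDual ℝ E (k' (x - u))) x := fun u x => by
    simpa using
      ((hk (x - u)).hasFDerivAt.comp x ((hasFDerivAt_id x).sub_const u)).mul_const (p u)
  have hFD := hasFDerivAt_integral_of_dominated_of_fderiv_le (μ := μ) (x₀ := x₀)
    (F := fun x u => k (x - u) * p u) (F' := fun x u => p u • toDual ℝ E (k' (x - u)))
    (bound := fun u => C * ‖p u‖) Filter.univ_mem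
    (Filter.Eventually.of_forall fun x =>
      (hk_cont.comp (continuous_const.sub continuous_id)).aestronglyMeasurable.mul
        hp.aestronglyMeasurable)
    hint
    (hp.aestronglyMeasurable.smul ((toDual ℝ E).continuous.comp
      (hk'.comp (continuous_const.sub continuous_id))).aestronglyMeasurable)
    (ae_of_all _ fun u x _ => by
      rw [norm_smul, LinearIsometryEquiv.norm_map, mul_comm]
      exact mul_le_mul_of_nonneg_right (hk'_le _) (norm_nonneg _))
    (hp.norm.const_mul C)
    (ae_of_all _ fun u x _ => hderiv u x)
  rw [hasGradientAt_iff_hasFDerivAt]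
  refine hFD.congr_fderiv ?_
  rw [← LinearIsometryEquiv.coe_toLinearIsometry, ← LinearIsometry.integral_comp_comm]
  simp

theorem mul_exp_neg_sq_div_le {σ : ℝ} (hσ : 0 < σ) (r : ℝ) :
    r * exp (-r ^ 2 / (2 * σ ^ 2)) ≤ σ := by
  rw [neg_div, exp_neg, ← div_eq_mul_inv, div_le_iff₀ (exp_pos _)]
  calc r ≤ σ * (r ^ 2 / (2 * σ ^ 2) + 1) := by
        have key : σ * (r ^ 2 / (2 * σ ^ 2) + 1) - r = ((r - σ) ^ 2 + σ ^ 2) / (2 * σ) := by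
          field_simp; ring
        linarith [show 0 ≤ ((r - σ) ^ 2 + σ ^ 2) / (2 * σ) by positivity]
    _ ≤ σ * exp (r ^ 2 / (2 * σ ^ 2)) :=
        mul_le_mul_of_nonneg_left (add_one_le_exp _) hσ.le

section GaussianKernel

variable {E : Type*} [NormedAddCommGroup E] [InnerProductSpace ℝ E]

noncomputable def gaussianKernel (σ : ℝ) (v : E) : ℝ :=
  (2 * π * σ ^ 2) ^ (-(Module.finrank ℝ E : ℝ) / 2) * exp (-‖v‖ ^ 2 / (2 * σ ^ 2))

theorem gaussianKernel_nonneg (σ : ℝ) (v : E) : 0 ≤ gaussianKernel σ v := by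
  unfold gaussianKernel; positivity

theorem gaussianKernel_le (σ : ℝ) (v : E) :
    gaussianKernel σ v ≤ (2 * π * σ ^ 2) ^ (-(Module.finrank ℝ E : ℝ) / 2) := by
  refine mul_le_of_le_one_right (by positivity) (exp_le_one_iff.2 ?_)
  exact div_nonpos_of_nonpos_of_nonneg (neg_nonpos.2 (by positivity)) (by positivity)

theorem continuous_gaussianKernel (σ : ℝ) : Continuous (gaussianKernel σ : E → ℝ) := by
  unfold gaussianKernel; fun_prop

theorem continuous_gaussianKernel_smul (σ : ℝ) :
    Continuous fun v : E => gaussianKernel σ v • ((σ ^ 2)⁻¹ • -v) :=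
  (continuous_gaussianKernel σ).smul (continuous_neg.const_smul _)

theorem hasGradientAt_gaussianKernel [CompleteSpace E] (σ : ℝ) (v : E) :
    HasGradientAt (gaussianKernel σ) (gaussianKernel σ v • ((σ ^ 2)⁻¹ • -v)) v := by
  set c := (2 * π * σ ^ 2) ^ (-(Module.finrank ℝ E : ℝ) / 2)
  have hfun : (gaussianKernel σ : E → ℝ) = fun w => c * exp (-(2 * σ ^ 2)⁻¹ * ‖w‖ ^ 2) := by
    funext w; rw [gaussianKernel]; congr 2; ring
  rw [hasGradientAt_iff_hasFDerivAt, hfun]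
  refine (((hasStrictFDerivAt_norm_sq v).hasFDerivAt.const_mul _).exp.const_mul c).congr_fderiv ?_
  ext w
  simp
  ring

theorem norm_gaussianKernel_smul_le {σ : ℝ} (hσ : 0 < σ) (v : E) :
    ‖gaussianKernel σ v • ((σ ^ 2)⁻¹ • -v)‖
      ≤ (2 * π * σ ^ 2) ^ (-(Module.finrank ℝ E : ℝ) / 2) / σ := by
  set c := (2 * π * σ ^ 2) ^ (-(Module.finrank ℝ E : ℝ) / 2)
  rw [norm_smul, norm_smul, norm_neg, Real.norm_of_nonneg (gaussianKernel_nonneg σ v),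
    Real.norm_of_nonneg (by positivity), gaussianKernel]
  calc _ = c / σ ^ 2 * (‖v‖ * exp (-‖v‖ ^ 2 / (2 * σ ^ 2))) := by ring
    _ ≤ c / σ ^ 2 * σ := by gcongr; exact mul_exp_neg_sq_div_le hσ _
    _ = c / σ := by field_simp

theorem gaussianKernel_sub_mul_smul_eq (σ : ℝ) (x u : E) (a : ℝ) :
    (gaussianKernel σ (x - u) * a) • ((σ ^ 2)⁻¹ • (u - x))
      = a • (gaussianKernel σ (x - u) • ((σ ^ 2)⁻¹ • -(x - u))) := by
  simp only [neg_sub, smul_smul]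
  ring_nf

variable [MeasurableSpace E] [BorelSpace E] {μ : Measure E} {p : E → ℝ}

theorem integrable_gaussianKernel_sub_mul (hp : Integrable p μ) (σ : ℝ) (x : E) :
    Integrable (fun u => gaussianKernel σ (x - u) * p u) μ :=
  hp.bdd_mul
    ((continuous_gaussianKernel σ).comp (continuous_const.sub continuous_id)).aestronglyMeasurable
    (ae_of_all _ fun u => by
      rw [norm_of_nonneg (gaussianKernel_nonneg σ _)]
      exact gaussianKernel_le σ _)

variable [FiniteDimensional ℝ E]

theorem integrable_gaussianKernel_sub_mul_smul {σ : ℝ} (hσ : 0 < σ) (hp : Integrable p μ)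
    (x : E) :
    Integrable (fun u => (gaussianKernel σ (x - u) * p u) • ((σ ^ 2)⁻¹ • (u - x))) μ := by
  simp_rw [gaussianKernel_sub_mul_smul_eq]
  exact hp.smul_bdd _ ((continuous_gaussianKernel_smul σ).comp
    (continuous_const.sub continuous_id)).aestronglyMeasurable
    (ae_of_all _ fun u => norm_gaussianKernel_smul_le hσ _)

theorem hasGradientAt_integral_gaussianKernel_sub_mul {σ : ℝ} (hσ : 0 < σ)
    (hp : Integrable p μ) (x : E) :
    HasGradientAt (fun y => ∫ u, gaussianKernel σ (y - u) * p u ∂μ)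
      (∫ u, (gaussianKernel σ (x - u) * p u) • ((σ ^ 2)⁻¹ • (u - x)) ∂μ) x := by
  simp_rw [gaussianKernel_sub_mul_smul_eq]
  exact hasGradientAt_integral_sub_mul (hasGradientAt_gaussianKernel σ)
    (continuous_gaussianKernel_smul σ) (norm_gaussianKernel_smul_le hσ) hp
    (integrable_gaussianKernel_sub_mul hp σ x)

end GaussianKernel

theorem explicit_eq_denoising_score_matching_general
    {n : ℕ} (σ : ℝ) (hσ : 0 < σ)
    (p : EuclideanSpace ℝ (Fin n) → ℝ)
    (hp_nonneg : ∀ u, 0 ≤ p u) (hp_prob : ∫ u, p u = 1)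
    (φσ : EuclideanSpace ℝ (Fin n) → ℝ)
    (hφσ : ∀ v, φσ v = (2 * π * σ ^ 2) ^ (-(n : ℝ) / 2) * Real.exp (-‖v‖ ^ 2 / (2 * σ ^ 2)))
    (pσ : EuclideanSpace ℝ (Fin n) → ℝ)
    (hpσ : ∀ x, pσ x = ∫ u, φσ (x - u) * p u)
    (hpσ_pos : ∀ x, 0 < pσ x)
    (s : EuclideanSpace ℝ (Fin n) → EuclideanSpace ℝ (Fin n)) (hs_meas : Measurable s)
    (hs_int : Integrable
      (fun z : EuclideanSpace ℝ (Fin n) × EuclideanSpace ℝ (Fin n) =>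
        ‖s z.2‖ ^ 2 * (φσ (z.2 - z.1) * p z.1)))
    (hscore_int : Integrable
      (fun x => ‖gradient (fun y => Real.log (pσ y)) x‖ ^ 2 * pσ x))
    (hcond_int : Integrable
      (fun z : EuclideanSpace ℝ (Fin n) × EuclideanSpace ℝ (Fin n) =>
        ‖(σ ^ 2)⁻¹ • (z.1 - z.2)‖ ^ 2 * (φσ (z.2 - z.1) * p z.1))) :
    ∫ x, ‖s x - gradient (fun y => Real.log (pσ y)) x‖ ^ 2 * pσ x
      = (∫ z : EuclideanSpace ℝ (Fin n) × EuclideanSpace ℝ (Fin n),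
            ‖s z.2 - (σ ^ 2)⁻¹ • (z.1 - z.2)‖ ^ 2 * (φσ (z.2 - z.1) * p z.1))
        + ((∫ x, ‖gradient (fun y => Real.log (pσ y)) x‖ ^ 2 * pσ x)
            - ∫ z : EuclideanSpace ℝ (Fin n) × EuclideanSpace ℝ (Fin n),
                ‖(σ ^ 2)⁻¹ • (z.1 - z.2)‖ ^ 2 * (φσ (z.2 - z.1) * p z.1)) := by
  have hp : Integrable p := Integrable.of_integral_ne_zero (hp_prob ▸ one_ne_zero)
  obtain rfl : φσ = gaussianKernel σ :=
    funext fun v => by rw [hφσ, gaussianKernel, finrank_euclideanSpace_fin]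
  have hgrad : ∀ x, HasGradientAt pσ
      (∫ u, (gaussianKernel σ (x - u) * p u) • ((σ ^ 2)⁻¹ • (u - x))) x := fun x => by
    rw [show pσ = _ from funext hpσ]
    exact hasGradientAt_integral_gaussianKernel_sub_mul hσ hp x
  exact integral_norm_sub_sq_mul_marginal_eq (μ := volume) (ν := volume)
    (g := fun z => (σ ^ 2)⁻¹ • (z.1 - z.2))
    (fun z => mul_nonneg (gaussianKernel_nonneg σ _) (hp_nonneg _))
    (((continuous_gaussianKernel σ).comp (continuous_snd.sub continuous_fst)).aestronglyMeasurable
      |>.mul hp.aestronglyMeasurable.comp_fst)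
    hpσ (fun x => (hgrad x).smul_gradient_log (hpσ_pos x).ne')
    (integrable_gaussianKernel_sub_mul_smul hσ hp) hs_meas.aestronglyMeasurable (by fun_prop)
    hs_int hcond_int hscore_int

/-- **Explicit vs. denoising score matching.** For a probability density `p` on `ℝⁿ`,
noise level `σ > 0`, Gaussian kernel `φσ` and smoothed density `pσ = p ∗ N(0, σ²I)` with
score `∇ log pσ`, the explicit score matching objective equals the denoising score matching
objective plus a constant `C` independent of the candidate score field `s`. -/
theorem explicit_eq_denoising_score_matching
    {n : ℕ} (σ : ℝ) (hσ : 0 < σ)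
    (p : EuclideanSpace ℝ (Fin n) → ℝ) (hp_meas : Measurable p)
    (hp_nonneg : ∀ u, 0 ≤ p u) (hp_prob : ∫ u, p u = 1)
    (φσ : EuclideanSpace ℝ (Fin n) → ℝ)
    (hφσ : ∀ v, φσ v = (2 * π * σ ^ 2) ^ (-(n : ℝ) / 2) * Real.exp (-‖v‖ ^ 2 / (2 * σ ^ 2)))
    (pσ : EuclideanSpace ℝ (Fin n) → ℝ)
    (hpσ : ∀ x, pσ x = ∫ u, φσ (x - u) * p u)
    (hpσ_pos : ∀ x, 0 < pσ x)
    (s : EuclideanSpace ℝ (Fin n) → EuclideanSpace ℝ (Fin n)) (hs_meas : Measurable s)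
    (hs_int : Integrable
      (fun z : EuclideanSpace ℝ (Fin n) × EuclideanSpace ℝ (Fin n) =>
        ‖s z.2‖ ^ 2 * (φσ (z.2 - z.1) * p z.1)))
    (hscore_int : Integrable
      (fun x => ‖gradient (fun y => Real.log (pσ y)) x‖ ^ 2 * pσ x))
    (hcond_int : Integrable
      (fun z : EuclideanSpace ℝ (Fin n) × EuclideanSpace ℝ (Fin n) =>
        ‖(σ ^ 2)⁻¹ • (z.1 - z.2)‖ ^ 2 * (φσ (z.2 - z.1) * p z.1))) :
    ∫ x, ‖s x - gradient (fun y => Real.log (pσ y)) x‖ ^ 2 * pσ x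
      = (∫ z : EuclideanSpace ℝ (Fin n) × EuclideanSpace ℝ (Fin n),
            ‖s z.2 - (σ ^ 2)⁻¹ • (z.1 - z.2)‖ ^ 2 * (φσ (z.2 - z.1) * p z.1))
        + ((∫ x, ‖gradient (fun y => Real.log (pσ y)) x‖ ^ 2 * pσ x)
            - ∫ z : EuclideanSpace ℝ (Fin n) × EuclideanSpace ℝ (Fin n),
                ‖(σ ^ 2)⁻¹ • (z.1 - z.2)‖ ^ 2 * (φσ (z.2 - z.1) * p z.1)) :=
  explicit_eq_denoising_score_matching_general σ hσ p hp_nonneg hp_prob φσ hφσ pσ hpσ hpσ_pos s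
    hs_meas hs_int hscore_int hcond_int
end

section
/- Let p : ℝ^n → (0,∞) be a continuously differentiable, strictly positive probability density with ∫ ‖∇ log p(u)‖² p(u) du < ∞, and let s : ℝ^n → ℝ^n be continuously differentiable with compact support. Then ∫ (1/2)‖s(u) − ∇ log p(u)‖² p(u) du = ∫ ( (1/2)‖s(u)‖² + div s(u) ) p(u) du + ∫ (1/2)‖∇ log p(u)‖² p(u) du, where div s(u) = tr(Ds(u)) is the divergence (trace of the Jacobian) of s. -/
/-!
Expanding the square, `½‖s - ∇log p‖² p = ½‖s‖² p - ⟪s, ∇p⟫ + ½‖∇log p‖² p`, because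
`(∇log p) p = ∇p`: the unknown score only survives in the constant term. The cross term is
removed by integrating by parts against the compactly supported field `s`, one coordinate of an
orthonormal basis at a time, which turns `∫ ⟪s, ∇p⟫` into `-∫ (div s) p`.
-/

open MeasureTheory Real

theorem Continuous.integrable_of_eq_zero_of_hasCompactSupport {X F G : Type*}
    [TopologicalSpace X] [MeasurableSpace X] [OpensMeasurableSpace X] {μ : Measure X}
    [IsFiniteMeasureOnCompacts μ] [NormedAddCommGroup F] [Zero G] {f : X → F} {g : X → G}
    (hf : Continuous f) (hg : HasCompactSupport g) (hfg : ∀ x, g x = 0 → f x = 0) :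
    Integrable f μ :=
  hf.integrable_of_hasCompactSupport <| hg.mono <| Function.support_subset_iff'.2 fun x hx ↦
    hfg x (Function.notMem_support.1 hx)

section Coordinates

variable {E ι : Type*} [NormedAddCommGroup E] [InnerProductSpace ℝ E] [Fintype ι]
  (b : OrthonormalBasis ι ℝ E)

theorem inner_gradient_eq_sum_inner_mul_fderiv [CompleteSpace E] (g : E → ℝ) (x y : E) :
    inner ℝ y (gradient g x) = ∑ i, inner ℝ (b i) y * fderiv ℝ g x (b i) := by
  simp only [← b.sum_inner_mul_inner y (gradient g x), real_inner_comm (b _) y,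
    real_inner_comm (gradient g x), inner_gradient_left]

theorem trace_fderiv_eq_sum_fderiv_inner {s : E → E} {x : E} (hs : DifferentiableAt ℝ s x) :
    LinearMap.trace ℝ E (fderiv ℝ s x : E →ₗ[ℝ] E)
      = ∑ i, fderiv ℝ (fun y ↦ inner ℝ (b i) (s y)) x (b i) := by
  rw [LinearMap.trace_eq_sum_inner _ b]
  refine Finset.sum_congr rfl fun i _ ↦ ?_
  simp [fderiv_inner_apply ℝ (differentiableAt_const (b i)) hs]

end Coordinates

section Score

variable {E : Type*} [NormedAddCommGroup E] [InnerProductSpace ℝ E] [CompleteSpace E]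
  {p : E → ℝ} {x : E}

theorem gradient_log_eq_inv_smul_gradient (hp : DifferentiableAt ℝ p x) (hx : p x ≠ 0) :
    gradient (fun y ↦ log (p y)) x = (p x)⁻¹ • gradient p x := by
  simp only [gradient, fderiv.log hp hx, map_smul]

theorem half_norm_sub_gradient_log_sq_mul (hp : DifferentiableAt ℝ p x) (hx : p x ≠ 0) (a : E) :
    1 / 2 * ‖a - gradient (fun y ↦ log (p y)) x‖ ^ 2 * p x
      = 1 / 2 * ‖a‖ ^ 2 * p x - inner ℝ a (gradient p x)
        + 1 / 2 * ‖gradient (fun y ↦ log (p y)) x‖ ^ 2 * p x := by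
  have hinner : inner ℝ a (gradient (fun y ↦ log (p y)) x) * p x = inner ℝ a (gradient p x) := by
    rw [gradient_log_eq_inv_smul_gradient hp hx, real_inner_smul_right, mul_right_comm,
      inv_mul_cancel₀ hx, one_mul]
  rw [norm_sub_sq_real, ← hinner]
  ring

end Score

section IntegrationByParts

variable {E : Type*} [NormedAddCommGroup E] [InnerProductSpace ℝ E] [FiniteDimensional ℝ E]
  [MeasurableSpace E] [BorelSpace E] {μ : Measure E} [μ.IsAddHaarMeasure]

theorem integral_mul_fderiv_eq_neg_fderiv_mul_of_hasCompactSupport {f g : E → ℝ}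
    (hf : ContDiff ℝ 1 f) (hf_supp : HasCompactSupport f) (hg : ContDiff ℝ 1 g) (v : E) :
    ∫ x, f x * fderiv ℝ g x v ∂μ = -∫ x, fderiv ℝ f x v * g x ∂μ := by
  have hf' : Continuous fun x ↦ fderiv ℝ f x v :=
    (hf.continuous_fderiv one_ne_zero).clm_apply continuous_const
  have hg' : Continuous fun x ↦ fderiv ℝ g x v :=
    (hg.continuous_fderiv one_ne_zero).clm_apply continuous_const
  exact integral_mul_fderiv_eq_neg_fderiv_mul_of_integrable
    ((hf'.mul hg.continuous).integrable_of_hasCompactSupport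
      (hf_supp.fderiv_apply ℝ v).mul_right)
    ((hf.continuous.mul hg').integrable_of_hasCompactSupport hf_supp.mul_right)
    ((hf.continuous.mul hg.continuous).integrable_of_hasCompactSupport hf_supp.mul_right)
    (fun x _ ↦ hf.differentiable one_ne_zero x) (fun x _ ↦ hg.differentiable one_ne_zero x)

theorem integral_inner_gradient_eq_neg_integral_trace_fderiv_mul {s : E → E} {p : E → ℝ}
    (hs : ContDiff ℝ 1 s) (hs_supp : HasCompactSupport s) (hp : ContDiff ℝ 1 p) :
    ∫ x, inner ℝ (s x) (gradient p x) ∂μ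
      = -∫ x, LinearMap.trace ℝ E (fderiv ℝ s x : E →ₗ[ℝ] E) * p x ∂μ := by
  obtain ⟨b⟩ : Nonempty (OrthonormalBasis (Fin (Module.finrank ℝ E)) ℝ E) :=
    ⟨stdOrthonormalBasis ℝ E⟩
  have hcoord (i) : ContDiff ℝ 1 fun x ↦ inner ℝ (b i) (s x) := contDiff_const.inner ℝ hs
  have hcoord_supp (i) : HasCompactSupport fun x ↦ inner ℝ (b i) (s x) :=
    hs_supp.comp_left (inner_zero_right _)
  have hint_coord_fderiv (i) : Integrable (fun x ↦ inner ℝ (b i) (s x) * fderiv ℝ p x (b i)) μ :=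
    ((hcoord i).continuous.mul ((hp.continuous_fderiv one_ne_zero).clm_apply
      continuous_const)).integrable_of_hasCompactSupport (hcoord_supp i).mul_right
  have hint_fderiv_coord (i) :
      Integrable (fun x ↦ fderiv ℝ (fun y ↦ inner ℝ (b i) (s y)) x (b i) * p x) μ :=
    ((((hcoord i).continuous_fderiv one_ne_zero).clm_apply continuous_const).mul
      hp.continuous).integrable_of_hasCompactSupport ((hcoord_supp i).fderiv_apply ℝ _).mul_right
  simp only [inner_gradient_eq_sum_inner_mul_fderiv b,
    trace_fderiv_eq_sum_fderiv_inner b (hs.differentiable one_ne_zero _), Finset.sum_mul]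
  rw [integral_finsetSum _ fun i _ ↦ hint_coord_fderiv i,
    integral_finsetSum _ fun i _ ↦ hint_fderiv_coord i, ← Finset.sum_neg_distrib]
  exact Finset.sum_congr rfl fun i _ ↦
    integral_mul_fderiv_eq_neg_fderiv_mul_of_hasCompactSupport (hcoord i) (hcoord_supp i) hp _

theorem integral_half_norm_sub_gradient_log_sq_mul {p : E → ℝ} {s : E → E}
    (hp : ContDiff ℝ 1 p) (hp_ne : ∀ x, p x ≠ 0)
    (hscore : Integrable (fun x ↦ ‖gradient (fun y ↦ log (p y)) x‖ ^ 2 * p x) μ)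
    (hs : ContDiff ℝ 1 s) (hs_supp : HasCompactSupport s) :
    ∫ x, 1 / 2 * ‖s x - gradient (fun y ↦ log (p y)) x‖ ^ 2 * p x ∂μ
      = ∫ x, (1 / 2 * ‖s x‖ ^ 2 + LinearMap.trace ℝ E (fderiv ℝ s x : E →ₗ[ℝ] E)) * p x ∂μ
        + ∫ x, 1 / 2 * ‖gradient (fun y ↦ log (p y)) x‖ ^ 2 * p x ∂μ := by
  have hgrad : Continuous (gradient p) :=
    (InnerProductSpace.toDual ℝ E).symm.continuous.comp (hp.continuous_fderiv one_ne_zero)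
  have hdiv : Continuous fun x ↦ LinearMap.trace ℝ E (fderiv ℝ s x : E →ₗ[ℝ] E) :=
    (LinearMap.continuous_of_finiteDimensional
      (LinearMap.trace ℝ E ∘ₗ ContinuousLinearMap.coeLM ℝ)).comp (hs.continuous_fderiv one_ne_zero)
  have hint_sq : Integrable (fun x ↦ 1 / 2 * ‖s x‖ ^ 2 * p x) μ :=
    Continuous.integrable_of_eq_zero_of_hasCompactSupport (by fun_prop) hs_supp fun x hx ↦ by
      simp [hx]
  have hint_inner : Integrable (fun x ↦ inner ℝ (s x) (gradient p x)) μ :=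
    (hs.continuous.inner hgrad).integrable_of_eq_zero_of_hasCompactSupport hs_supp fun x hx ↦ by
      simp [hx]
  have hint_div : Integrable (fun x ↦ LinearMap.trace ℝ E (fderiv ℝ s x : E →ₗ[ℝ] E) * p x) μ :=
    (hdiv.mul hp.continuous).integrable_of_eq_zero_of_hasCompactSupport (hs_supp.fderiv ℝ)
      fun x hx ↦ by simp [hx]
  have hint_score : Integrable (fun x ↦ 1 / 2 * ‖gradient (fun y ↦ log (p y)) x‖ ^ 2 * p x) μ := by
    simpa only [mul_assoc] using hscore.const_mul (1 / 2)
  calc ∫ x, 1 / 2 * ‖s x - gradient (fun y ↦ log (p y)) x‖ ^ 2 * p x ∂μ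
      = ∫ x, 1 / 2 * ‖s x‖ ^ 2 * p x - inner ℝ (s x) (gradient p x)
          + 1 / 2 * ‖gradient (fun y ↦ log (p y)) x‖ ^ 2 * p x ∂μ := by
        congr 1 with x
        exact half_norm_sub_gradient_log_sq_mul (hp.differentiable one_ne_zero x) (hp_ne x) _
    _ = _ := by
        rw [integral_add (hint_sq.sub hint_inner : Integrable (fun x ↦ _ - _) μ) hint_score,
          integral_sub hint_sq hint_inner,
          integral_inner_gradient_eq_neg_integral_trace_fderiv_mul hs hs_supp hp]
        simp only [add_mul, integral_add hint_sq hint_div]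
        ring

end IntegrationByParts

theorem score_matching_integration_by_parts_general
    {n : ℕ} (p : EuclideanSpace ℝ (Fin n) → ℝ)
    (hp_smooth : ContDiff ℝ 1 p) (hp_pos : ∀ u, 0 < p u)
    (hscore_int : Integrable
      (fun u => ‖gradient (fun v => Real.log (p v)) u‖ ^ 2 * p u))
    (s : EuclideanSpace ℝ (Fin n) → EuclideanSpace ℝ (Fin n))
    (hs_smooth : ContDiff ℝ 1 s) (hs_supp : HasCompactSupport s) :
    ∫ u, (1 / 2) * ‖s u - gradient (fun v => Real.log (p v)) u‖ ^ 2 * p u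
      = (∫ u, ((1 / 2) * ‖s u‖ ^ 2
            + LinearMap.trace ℝ (EuclideanSpace ℝ (Fin n))
                (fderiv ℝ s u : EuclideanSpace ℝ (Fin n) →ₗ[ℝ] EuclideanSpace ℝ (Fin n)))
          * p u)
        + ∫ u, (1 / 2) * ‖gradient (fun v => Real.log (p v)) u‖ ^ 2 * p u :=
  integral_half_norm_sub_gradient_log_sq_mul hp_smooth (fun u ↦ (hp_pos u).ne') hscore_int
    hs_smooth hs_supp

/-- **Score matching via integration by parts.** For a strictly positive `C¹` probability
density `p` on `ℝⁿ` with square-integrable score, and a compactly supported `C¹` vector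
field `s`, the score matching objective `∫ ½‖s − ∇ log p‖² p` equals
`∫ (½‖s‖² + div s) p` plus the constant `∫ ½‖∇ log p‖² p`. -/
theorem score_matching_integration_by_parts
    {n : ℕ} (p : EuclideanSpace ℝ (Fin n) → ℝ)
    (hp_smooth : ContDiff ℝ 1 p) (hp_pos : ∀ u, 0 < p u)
    (hp_prob : ∫ u, p u = 1)
    (hscore_int : Integrable
      (fun u => ‖gradient (fun v => Real.log (p v)) u‖ ^ 2 * p u))
    (s : EuclideanSpace ℝ (Fin n) → EuclideanSpace ℝ (Fin n))
    (hs_smooth : ContDiff ℝ 1 s) (hs_supp : HasCompactSupport s) :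
    ∫ u, (1 / 2) * ‖s u - gradient (fun v => Real.log (p v)) u‖ ^ 2 * p u
      = (∫ u, ((1 / 2) * ‖s u‖ ^ 2
            + LinearMap.trace ℝ (EuclideanSpace ℝ (Fin n))
                (fderiv ℝ s u : EuclideanSpace ℝ (Fin n) →ₗ[ℝ] EuclideanSpace ℝ (Fin n)))
          * p u)
        + ∫ u, (1 / 2) * ‖gradient (fun v => Real.log (p v)) u‖ ^ 2 * p u :=
  score_matching_integration_by_parts_general p hp_smooth hp_pos hscore_int s hs_smooth hs_supp
end

section
/- Let μ be a σ-finite measure on a measurable space Ω, let p, q : Ω → [0,∞) be probability densities with respect to μ, and set P = μ.withDensity p, Q = μ.withDensity q, and M = (1/2)(P + Q). Then for every measurable D : Ω → (0,1), ∫ log(D) p dμ + ∫ log(1 − D) q dμ ≤ KL(P ‖ M) + KL(Q ‖ M) − log 4 (inequality in the extended reals), and equality is attained for the discriminator D*(u) = p(u)/(p(u)+q(u)) (defined arbitrarily where p(u)+q(u) = 0). In particular, the supremum of the GAN discriminator objective over all discriminators equals 2·JSD(P, Q) − log 4, where JSD(P,Q) = (1/2)KL(P‖M) + (1/2)KL(Q‖M)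 is the Jensen–Shannon divergence. -/
open MeasureTheory Real
open scoped ENNReal

/-!
At each point the binary cross-entropy `-a log d - b log (1 - d)` is minimised over `d ∈ (0,1)`
at `d = a / (a + b)`; this is Gibbs' inequality `a log (x / a) ≤ x - a`, applied once with
`x = d (a + b)` and once with `x = (1 - d) (a + b)`. Integrating against `μ` bounds every
objective by the one of `D* = p / (p + q)`. The value at `D*` is finite, since
`-p log (p / (p + q)) ≤ q`, and `log (2p / (p + q)) p = p log 2 + p log (p / (p + q))`
identifies it with `KL(P‖M) + KL(Q‖M) - log 4`.
-/

lemma log_mul_le_log_div_mul_add {a s c : ℝ} (ha : 0 ≤ a) (has : a ≤ s) (hc : 0 < c) :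
    log c * a ≤ log (a / s) * a + (c * s - a) := by
  rcases ha.eq_or_lt with rfl | ha
  · simpa using mul_nonneg hc.le has
  have hs : 0 < s := ha.trans_le has
  have hgibbs := mul_le_mul_of_nonneg_right
    (log_le_sub_one_of_pos (show 0 < c * s / a by positivity)) ha.le
  rw [log_div (by positivity) ha.ne', log_mul hc.ne' hs.ne', sub_one_mul,
    div_mul_cancel₀ _ ha.ne'] at hgibbs
  rw [log_div ha.ne' hs.ne']
  linarith

lemma neg_log_div_mul_nonneg {a s : ℝ} (ha : 0 ≤ a) (has : a ≤ s) : 0 ≤ -log (a / s) * a :=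
  mul_nonneg (neg_nonneg.2 <| log_nonpos (div_nonneg ha (ha.trans has))
    (div_le_one_of_le₀ has (ha.trans has))) ha

lemma neg_log_div_mul_le {a s : ℝ} (ha : 0 ≤ a) (has : a ≤ s) :
    -log (a / s) * a ≤ s - a := by
  have := log_mul_le_log_div_mul_add ha has one_pos
  simp only [log_one, zero_mul, one_mul] at this
  linarith

lemma log_mul_add_log_one_sub_mul_le {a b d : ℝ} (ha : 0 ≤ a) (hb : 0 ≤ b)
    (hd : d ∈ Set.Ioo (0 : ℝ) 1) :
    log d * a + log (1 - d) * b ≤ log (a / (a + b)) * a + log (b / (a + b)) * b := by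
  have hda := log_mul_le_log_div_mul_add ha (le_add_of_nonneg_right hb) hd.1
  have hdb := log_mul_le_log_div_mul_add hb (le_add_of_nonneg_left ha) (sub_pos.2 hd.2)
  linarith

lemma log_two_mul_div_mul {a s : ℝ} (ha : 0 ≤ a) (has : a ≤ s) :
    log (2 * a / s) * a = log 2 * a + log (a / s) * a := by
  rcases ha.eq_or_lt with rfl | ha
  · simp
  rw [mul_div_assoc, log_mul two_ne_zero (div_pos ha (ha.trans_le has)).ne', add_mul]

lemma neg_coe_add_neg_coe (x y : ℝ≥0∞) :
    -(x : EReal) + -(y : EReal) = -((x + y : ℝ≥0∞) : EReal) := by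
  rw [EReal.coe_ennreal_add, EReal.neg_add (.inl (EReal.coe_ennreal_ne_bot _))
    (.inr (EReal.coe_ennreal_ne_bot _)), sub_eq_add_neg]

lemma neg_coe_ofReal_add_ofReal {a b : ℝ} (ha : 0 ≤ a) (hb : 0 ≤ b) :
    -((ENNReal.ofReal a + ENNReal.ofReal b : ℝ≥0∞) : EReal) = ((-(a + b) : ℝ) : EReal) := by
  rw [← ENNReal.ofReal_add ha hb, EReal.coe_ennreal_ofReal, max_eq_left (by positivity),
    EReal.coe_neg]

section Integrals

variable {Ω : Type*} [MeasurableSpace Ω] {μ : Measure Ω}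

lemma lintegral_withDensity_ofReal {p h : Ω → ℝ} (hp : Measurable p) (hp0 : ∀ u, 0 ≤ p u)
    (hh : Measurable h) :
    ∫⁻ u, ENNReal.ofReal (h u) ∂μ.withDensity (fun u => ENNReal.ofReal (p u))
      = ∫⁻ u, ENNReal.ofReal (h u * p u) ∂μ := by
  rw [lintegral_withDensity_eq_lintegral_mul μ hp.ennreal_ofReal hh.ennreal_ofReal]
  congr 1 with u
  rw [Pi.mul_apply, ENNReal.ofReal_mul' (hp0 u), mul_comm]

lemma integrable_and_integral_eq_one_of_isProbabilityMeasure {p : Ω → ℝ} (hp : Measurable p)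
    (hp0 : ∀ u, 0 ≤ p u)
    [IsProbabilityMeasure (μ.withDensity fun u => ENNReal.ofReal (p u))] :
    Integrable p μ ∧ ∫ u, p u ∂μ = 1 := by
  have hone : ∫⁻ u, ENNReal.ofReal (p u) ∂μ = 1 := by
    simpa [withDensity_apply _ MeasurableSet.univ] using
      measure_univ (μ := μ.withDensity fun u => ENNReal.ofReal (p u))
  have hp0' : 0 ≤ᵐ[μ] p := .of_forall hp0
  have hp_int : Integrable p μ :=
    (lintegral_ofReal_ne_top_iff_integrable hp.aestronglyMeasurable hp0').1 (by simp [hone])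
  refine ⟨hp_int, ?_⟩
  rw [integral_eq_lintegral_of_nonneg_ae hp0' hp.aestronglyMeasurable, hone, ENNReal.toReal_one]

variable {f s : Ω → ℝ}

lemma integrable_neg_log_div_mul (hf : Measurable f) (hf0 : ∀ u, 0 ≤ f u) (hs : Integrable s μ)
    (hfs : ∀ u, f u ≤ s u) : Integrable (fun u => -log (f u / s u) * f u) μ := by
  have hmeas := (hf.aemeasurable.div hs.aemeasurable).log.neg.mul hf.aemeasurable
  refine hs.mono' hmeas.aestronglyMeasurable (.of_forall fun u => ?_)
  rw [norm_of_nonneg (neg_log_div_mul_nonneg (hf0 u) (hfs u))]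
  linarith [neg_log_div_mul_le (hf0 u) (hfs u), hf0 u]

lemma lintegral_ofReal_neg_log_div_mul (hf : Measurable f) (hf0 : ∀ u, 0 ≤ f u)
    (hs : Integrable s μ) (hfs : ∀ u, f u ≤ s u) :
    ∫⁻ u, ENNReal.ofReal (-log (f u / s u) * f u) ∂μ
      = ENNReal.ofReal (∫ u, -log (f u / s u) * f u ∂μ) :=
  (ofReal_integral_eq_lintegral_ofReal (integrable_neg_log_div_mul hf hf0 hs hfs)
    (.of_forall fun u => neg_log_div_mul_nonneg (hf0 u) (hfs u))).symm

lemma integral_log_two_mul_div_mul (hf : Measurable f) (hf0 : ∀ u, 0 ≤ f u)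
    (hf_int : Integrable f μ) (hf_one : ∫ u, f u ∂μ = 1) (hs : Integrable s μ)
    (hfs : ∀ u, f u ≤ s u) :
    ∫ u, log (2 * f u / s u) * f u ∂μ = log 2 - ∫ u, -log (f u / s u) * f u ∂μ := by
  have hint := integrable_neg_log_div_mul hf hf0 hs hfs
  calc ∫ u, log (2 * f u / s u) * f u ∂μ
      = ∫ u, (log 2 * f u - -log (f u / s u) * f u) ∂μ := by
        congr 1 with u
        rw [log_two_mul_div_mul (hf0 u) (hfs u)]
        ring
    _ = log 2 - ∫ u, -log (f u / s u) * f u ∂μ := by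
        rw [integral_sub (hf_int.const_mul _) hint, integral_const_mul, hf_one, mul_one]

lemma lintegral_neg_log_div_add_le {p q D : Ω → ℝ} (hp : Measurable p) (hp0 : ∀ u, 0 ≤ p u)
    (hq0 : ∀ u, 0 ≤ q u) (hD : Measurable D) (hD01 : ∀ u, D u ∈ Set.Ioo (0 : ℝ) 1) :
    ∫⁻ u, ENNReal.ofReal (-log (p u / (p u + q u)) * p u) ∂μ
        + ∫⁻ u, ENNReal.ofReal (-log (q u / (p u + q u)) * q u) ∂μ
      ≤ ∫⁻ u, ENNReal.ofReal (-log (D u) * p u) ∂μ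
        + ∫⁻ u, ENNReal.ofReal (-log (1 - D u) * q u) ∂μ := by
  refine (le_lintegral_add _ _).trans <|
    (lintegral_mono fun u => ?_).trans_eq (lintegral_add_left (by fun_prop) _)
  have hp_le : p u ≤ p u + q u := le_add_of_nonneg_right (hq0 u)
  have hq_le : q u ≤ p u + q u := le_add_of_nonneg_left (hp0 u)
  rw [← ENNReal.ofReal_add (neg_log_div_mul_nonneg (hp0 u) hp_le)
    (neg_log_div_mul_nonneg (hq0 u) hq_le)]
  refine (ENNReal.ofReal_le_ofReal ?_).trans ENNReal.ofReal_add_le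
  linarith [log_mul_add_log_one_sub_mul_le (hp0 u) (hq0 u) (hD01 u)]

lemma neg_coe_lintegral_neg_log_div_add_eq {p q : Ω → ℝ} (hp : Measurable p)
    (hp0 : ∀ u, 0 ≤ p u) (hq : Measurable q) (hq0 : ∀ u, 0 ≤ q u)
    [IsProbabilityMeasure (μ.withDensity fun u => ENNReal.ofReal (p u))]
    [IsProbabilityMeasure (μ.withDensity fun u => ENNReal.ofReal (q u))] :
    -((∫⁻ u, ENNReal.ofReal (-log (p u / (p u + q u)) * p u) ∂μ
        + ∫⁻ u, ENNReal.ofReal (-log (q u / (p u + q u)) * q u) ∂μ : ℝ≥0∞) : EReal)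
      = (((∫ u, log (2 * p u / (p u + q u)) * p u ∂μ)
        + (∫ u, log (2 * q u / (p u + q u)) * q u ∂μ) - log 4 : ℝ) : EReal) := by
  obtain ⟨hp_int, hp_one⟩ :=
    integrable_and_integral_eq_one_of_isProbabilityMeasure (μ := μ) hp hp0
  obtain ⟨hq_int, hq_one⟩ :=
    integrable_and_integral_eq_one_of_isProbabilityMeasure (μ := μ) hq hq0
  have hpq_int : Integrable (fun u => p u + q u) μ := hp_int.add hq_int
  have hp_le u : p u ≤ p u + q u := le_add_of_nonneg_right (hq0 u)
  have hq_le u : q u ≤ p u + q u := le_add_of_nonneg_left (hp0 u)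
  rw [lintegral_ofReal_neg_log_div_mul hp hp0 hpq_int hp_le,
    lintegral_ofReal_neg_log_div_mul hq hq0 hpq_int hq_le,
    integral_log_two_mul_div_mul hp hp0 hp_int hp_one hpq_int hp_le,
    integral_log_two_mul_div_mul hq hq0 hq_int hq_one hpq_int hq_le,
    neg_coe_ofReal_add_ofReal
      (integral_nonneg fun u => neg_log_div_mul_nonneg (hp0 u) (hp_le u))
      (integral_nonneg fun u => neg_log_div_mul_nonneg (hq0 u) (hq_le u))]
  congr 1
  rw [show (4 : ℝ) = 2 ^ 2 by norm_num, log_pow]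
  push_cast
  ring

end Integrals

theorem gan_discriminator_objective_eq_jsd_general
    {Ω : Type*} [MeasurableSpace Ω] (μ : Measure Ω)
    (p q : Ω → ℝ) (hp_meas : Measurable p) (hp_nonneg : ∀ u, 0 ≤ p u)
    (hq_meas : Measurable q) (hq_nonneg : ∀ u, 0 ≤ q u)
    (P Q : Measure Ω)
    (hP : P = μ.withDensity (fun u => ENNReal.ofReal (p u)))
    (hQ : Q = μ.withDensity (fun u => ENNReal.ofReal (q u)))
    (hPprob : IsProbabilityMeasure P) (hQprob : IsProbabilityMeasure Q)
    (kl1 kl2 : ℝ)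
    (hkl1 : kl1 = ∫ u, Real.log (2 * p u / (p u + q u)) * p u ∂μ)
    (hkl2 : kl2 = ∫ u, Real.log (2 * q u / (p u + q u)) * q u ∂μ) :
    (∀ D : Ω → ℝ, Measurable D → (∀ u, D u ∈ Set.Ioo (0 : ℝ) 1) →
      (-((∫⁻ u, ENNReal.ofReal (-Real.log (D u)) ∂P : ℝ≥0∞) : EReal))
          + (-((∫⁻ u, ENNReal.ofReal (-Real.log (1 - D u)) ∂Q : ℝ≥0∞) : EReal))
        ≤ ((kl1 + kl2 - Real.log 4 : ℝ) : EReal)) ∧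
    ((-((∫⁻ u, ENNReal.ofReal (-Real.log (p u / (p u + q u))) ∂P : ℝ≥0∞) : EReal))
          + (-((∫⁻ u, ENNReal.ofReal (-Real.log (q u / (p u + q u))) ∂Q : ℝ≥0∞) : EReal))
        = ((kl1 + kl2 - Real.log 4 : ℝ) : EReal)) := by
  subst hP hQ hkl1 hkl2
  have hoptimal :=
    neg_coe_lintegral_neg_log_div_add_eq (μ := μ) hp_meas hp_nonneg hq_meas hq_nonneg
  refine ⟨fun D hD hD01 => ?_, ?_⟩
  · rw [lintegral_withDensity_ofReal hp_meas hp_nonneg (h := fun u => -log (D u)) (by fun_prop),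
      lintegral_withDensity_ofReal hq_meas hq_nonneg (h := fun u => -log (1 - D u)) (by fun_prop),
      neg_coe_add_neg_coe, ← hoptimal, EReal.neg_le_neg_iff,
      EReal.coe_ennreal_le_coe_ennreal_iff]
    exact lintegral_neg_log_div_add_le hp_meas hp_nonneg hq_nonneg hD hD01
  · rw [lintegral_withDensity_ofReal hp_meas hp_nonneg (h := fun u => -log (p u / (p u + q u)))
        (by fun_prop),
      lintegral_withDensity_ofReal hq_meas hq_nonneg (h := fun u => -log (q u / (p u + q u)))
        (by fun_prop),
      neg_coe_add_neg_coe, hoptimal]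

/-- **Optimal GAN discriminator and Jensen–Shannon divergence.** Let `P = p·μ`,
`Q = q·μ` be probability measures and `M = ½(P+Q)`, with
`KL(P‖M) = ∫ log(2p/(p+q)) dP` and `KL(Q‖M) = ∫ log(2q/(p+q)) dQ`. For every measurable
discriminator `D : Ω → (0,1)`,
`∫ log D dP + ∫ log(1−D) dQ ≤ KL(P‖M) + KL(Q‖M) − log 4` in the extended reals (the
nonpositive integrals on the left are encoded as `−∫⁻ (−log D) dP` etc.), and equality
holds for `D* = p/(p+q)`. -/
theorem gan_discriminator_objective_eq_jsd
    {Ω : Type*} [MeasurableSpace Ω] (μ : Measure Ω) [SigmaFinite μ]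
    (p q : Ω → ℝ) (hp_meas : Measurable p) (hp_nonneg : ∀ u, 0 ≤ p u)
    (hq_meas : Measurable q) (hq_nonneg : ∀ u, 0 ≤ q u)
    (P Q : Measure Ω)
    (hP : P = μ.withDensity (fun u => ENNReal.ofReal (p u)))
    (hQ : Q = μ.withDensity (fun u => ENNReal.ofReal (q u)))
    (hPprob : IsProbabilityMeasure P) (hQprob : IsProbabilityMeasure Q)
    (kl1 kl2 : ℝ)
    (hkl1 : kl1 = ∫ u, Real.log (2 * p u / (p u + q u)) * p u ∂μ)
    (hkl2 : kl2 = ∫ u, Real.log (2 * q u / (p u + q u)) * q u ∂μ) :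
    (∀ D : Ω → ℝ, Measurable D → (∀ u, D u ∈ Set.Ioo (0 : ℝ) 1) →
      (-((∫⁻ u, ENNReal.ofReal (-Real.log (D u)) ∂P : ℝ≥0∞) : EReal))
          + (-((∫⁻ u, ENNReal.ofReal (-Real.log (1 - D u)) ∂Q : ℝ≥0∞) : EReal))
        ≤ ((kl1 + kl2 - Real.log 4 : ℝ) : EReal)) ∧
    ((-((∫⁻ u, ENNReal.ofReal (-Real.log (p u / (p u + q u))) ∂P : ℝ≥0∞) : EReal))
          + (-((∫⁻ u, ENNReal.ofReal (-Real.log (q u / (p u + q u))) ∂Q : ℝ≥0∞) : EReal))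
        = ((kl1 + kl2 - Real.log 4 : ℝ) : EReal)) :=
  gan_discriminator_objective_eq_jsd_general μ p q hp_meas hp_nonneg hq_meas hq_nonneg P Q hP hQ
    hPprob hQprob kl1 kl2 hkl1 hkl2
end

section
/- Let H be a real inner product space and let D : H → H satisfy D(0) = 0 and be demicontractive with constant κ ∈ [0,1), meaning that for every u ∈ H and every fixed point u* of D (i.e., D(u*) = u*), one has ‖D(u) − u*‖² ≤ ‖u − u*‖² + κ‖u − D(u)‖². Then for every u ∈ H: ⟨u, u − D(u)⟩ = 0 if and only if D(u) = u. That is, the fixed points of the denoiser D coincide exactly with the roots of the regularization-by-denoising functional R(u) = ⟨u, u − D(u)⟩. -/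
/-!
Testing demicontractivity against the fixed point `0` and expanding `‖D u‖²` around `u` gives
`(1 - κ) ‖u - D u‖² ≤ 2 ⟪u, u - D u⟫`, so at a root of `⟪u, u - D u⟫` the residual `u - D u`
vanishes because `κ < 1`.
-/

open scoped RealInnerProductSpace

section

variable {E : Type*} [NormedAddCommGroup E] [InnerProductSpace ℝ E]

theorem norm_sq_eq_norm_sq_sub_two_inner_add_norm_sub_sq (x y : E) :
    ‖y‖ ^ 2 = ‖x‖ ^ 2 - 2 * ⟪x, x - y⟫ + ‖x - y‖ ^ 2 := by
  simpa using norm_sub_sq_real x (x - y)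

theorem one_sub_mul_norm_sub_sq_le_two_inner {x y : E} {κ : ℝ}
    (h : ‖y‖ ^ 2 ≤ ‖x‖ ^ 2 + κ * ‖x - y‖ ^ 2) :
    (1 - κ) * ‖x - y‖ ^ 2 ≤ 2 * ⟪x, x - y⟫ := by
  rw [norm_sq_eq_norm_sq_sub_two_inner_add_norm_sub_sq x y] at h
  linarith

theorem eq_of_inner_sub_eq_zero_of_norm_sq_le {x y : E} {κ : ℝ} (hκ : κ < 1)
    (h : ‖y‖ ^ 2 ≤ ‖x‖ ^ 2 + κ * ‖x - y‖ ^ 2) (hxy : ⟪x, x - y⟫ = 0) : y = x := by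
  have hle : (1 - κ) * ‖x - y‖ ^ 2 ≤ 0 := by
    simpa [hxy] using one_sub_mul_norm_sub_sq_le_two_inner h
  have hnorm : ‖x - y‖ ^ 2 = 0 :=
    le_antisymm (nonpos_of_mul_nonpos_right hle (sub_pos.mpr hκ)) (sq_nonneg _)
  simpa [sub_eq_zero, eq_comm] using hnorm

end

theorem red_fixedPoints_eq_roots_general
    {H : Type*} [NormedAddCommGroup H] [InnerProductSpace ℝ H]
    (D : H → H) (hD0 : D 0 = 0)
    (κ : ℝ) (hκ1 : κ < 1)
    (hdemi : ∀ u ustar : H, D ustar = ustar →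
      ‖D u - ustar‖ ^ 2 ≤ ‖u - ustar‖ ^ 2 + κ * ‖u - D u‖ ^ 2) :
    ∀ u : H, ⟪u, u - D u⟫ = 0 ↔ D u = u := by
  intro u
  constructor
  · have hdemi_zero : ‖D u‖ ^ 2 ≤ ‖u‖ ^ 2 + κ * ‖u - D u‖ ^ 2 := by
      simpa only [sub_zero] using hdemi u 0 hD0
    exact eq_of_inner_sub_eq_zero_of_norm_sq_le hκ1 hdemi_zero
  · intro hfix
    rw [hfix, sub_self, inner_zero_right]

/-- **RED fixed points = roots of the RED functional.** Let `H` be a real inner product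
space and `D : H → H` with `D 0 = 0` be demicontractive with constant `κ ∈ [0,1)`. Then
for every `u`, `⟪u, u − D u⟫ = 0` iff `D u = u`. -/
theorem red_fixedPoints_eq_roots
    {H : Type*} [NormedAddCommGroup H] [InnerProductSpace ℝ H]
    (D : H → H) (hD0 : D 0 = 0)
    (κ : ℝ) (hκ0 : 0 ≤ κ) (hκ1 : κ < 1)
    (hdemi : ∀ u ustar : H, D ustar = ustar →
      ‖D u - ustar‖ ^ 2 ≤ ‖u - ustar‖ ^ 2 + κ * ‖u - D u‖ ^ 2) :
    ∀ u : H, ⟪u, u - D u⟫ = 0 ↔ D u = u :=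
  red_fixedPoints_eq_roots_general D hD0 κ hκ1 hdemi
end

section
/- Let D : ℝ^n → ℝ^n be continuously differentiable and assume: (i) for every u ∈ ℝ^n, the Jacobian D'(u) ∈ ℝ^{n×n} is a symmetric matrix; (ii) for every u ∈ ℝ^n, D'(u)·u = D(u) (the Euler identity implied by local homogeneity). Define ρ : ℝ^n → ℝ by ρ(u) = (1/2)⟨u, u − D(u)⟩. Then ρ is differentiable and ∇ρ(u) = u − D(u) for every u ∈ ℝ^n. -/
open scoped RealInnerProductSpace

/-!
Differentiating `ρ(v) = ½⟪v, v - D v⟫` at `u` in direction `h` gives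
`½(⟪h, u - D u⟫ + ⟪u, h⟫ - ⟪u, D'h⟫)`. Symmetry of `D'` and the Euler identity turn the
last term into `⟪D'u, h⟫ = ⟪D u, h⟫`, so the derivative is `h ↦ ⟪u - D u, h⟫`.
-/

section

variable {E : Type*} [NormedAddCommGroup E] [InnerProductSpace ℝ E]

theorem inner_apply_eq_of_symm_of_euler {D' : E →L[ℝ] E} {u d : E}
    (hsym : ∀ v, ⟪D' v, u⟫ = ⟪D' u, v⟫) (heuler : D' u = d) (h : E) :
    ⟪u, D' h⟫ = ⟪d, h⟫ := by
  rw [real_inner_comm, hsym, heuler]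

theorem HasFDerivAt.hasGradientAt_half_inner_sub_self [CompleteSpace E]
    {D : E → E} {D' : E →L[ℝ] E} {u : E} (hD : HasFDerivAt D D' u)
    (hsym : ∀ v, ⟪D' v, u⟫ = ⟪D' u, v⟫) (heuler : D' u = D u) :
    HasGradientAt (fun v => (1 / 2 : ℝ) * ⟪v, v - D v⟫) (u - D u) u := by
  rw [hasGradientAt_iff_hasFDerivAt]
  refine (((hasFDerivAt_id u).inner ℝ ((hasFDerivAt_id u).sub hD)).const_mul
    (1 / 2 : ℝ)).congr_fderiv ?_
  ext h
  simp only [smul_apply, sub_apply, ContinuousLinearMap.comp_apply,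
    ContinuousLinearMap.prod_apply, ContinuousLinearMap.id_apply, fderivInnerCLM_apply,
    InnerProductSpace.toDual_apply_apply, smul_eq_mul, Pi.sub_apply, id_eq]
  rw [inner_sub_right, inner_apply_eq_of_symm_of_euler hsym heuler, inner_sub_right,
    inner_sub_left, real_inner_comm h u, real_inner_comm h (D u)]
  ring

end

/-- **Gradient identity for regularization by denoising (RED).** If `D : ℝⁿ → ℝⁿ` is `C¹`
with symmetric Jacobian satisfying the Euler identity `D'(u)u = D(u)`, then
`ρ(u) = ½⟪u, u − D u⟫` is differentiable with gradient `∇ρ(u) = u − D u`. -/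
theorem red_gradient_identity
    {n : ℕ} (D : EuclideanSpace ℝ (Fin n) → EuclideanSpace ℝ (Fin n))
    (hD : ContDiff ℝ 1 D)
    (hsym : ∀ u v w : EuclideanSpace ℝ (Fin n), ⟪fderiv ℝ D u v, w⟫ = ⟪fderiv ℝ D u w, v⟫)
    (heuler : ∀ u : EuclideanSpace ℝ (Fin n), fderiv ℝ D u u = D u) :
    ∀ u : EuclideanSpace ℝ (Fin n),
      HasGradientAt (fun v => (1 / 2 : ℝ) * ⟪v, v - D v⟫) (u - D u) u := fun u =>
  (hD.differentiable one_ne_zero u).hasFDerivAt.hasGradientAt_half_inner_sub_self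
    (fun v => hsym u v u) (heuler u)
end

section
/- Let A : ℝ^n → ℝ^m be linear, let S ⊆ ℝ^n, and suppose A satisfies the set-restricted eigenvalue condition S-REC(S, γ, δ) with γ > 0 and δ ≥ 0: for all x₁, x₂ ∈ S, ‖A(x₁ − x₂)‖ ≥ γ‖x₁ − x₂‖ − δ. Let x* ∈ ℝ^n, ζ ∈ ℝ^m, y = A x* + ζ, and ε ≥ 0, and suppose x̂ ∈ S satisfies ‖A x̂ − y‖ ≤ ‖A x − y‖ + ε for all x ∈ S. Then for every x ∈ S, ‖x̂ − x‖ ≤ (2‖A(x − x*)‖ + 2‖ζ‖ + ε + δ) / γ. In particular, if x* ∈ S, then ‖x̂ − x*‖ ≤ (2‖ζ‖ + ε + δ)/γ. -/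
section SREC

variable {E F 𝓕 : Type*} [SeminormedAddCommGroup E] [SeminormedAddCommGroup F]
  [FunLike 𝓕 E F] [AddMonoidHomClass 𝓕 E F]

/-- The set-restricted eigenvalue condition S-REC(S, γ, δ). -/
def SatisfiesSREC (A : 𝓕) (S : Set E) (γ δ : ℝ) : Prop :=
  ∀ x₁ ∈ S, ∀ x₂ ∈ S, γ * ‖x₁ - x₂‖ - δ ≤ ‖A (x₁ - x₂)‖

lemma norm_map_sub_le_of_misfit_le (A : 𝓕) {xhat x : E} {y : F} {ε : ℝ}
    (hmin : ‖A xhat - y‖ ≤ ‖A x - y‖ + ε) :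
    ‖A (xhat - x)‖ ≤ 2 * ‖A x - y‖ + ε :=
  calc ‖A (xhat - x)‖ = ‖(A xhat - y) - (A x - y)‖ := by rw [map_sub, sub_sub_sub_cancel_right]
    _ ≤ ‖A xhat - y‖ + ‖A x - y‖ := norm_sub_le _ _
    _ ≤ 2 * ‖A x - y‖ + ε := by linarith

lemma norm_map_sub_sub_add_le (A : 𝓕) (x xstar : E) (ζ : F) :
    ‖A x - (A xstar + ζ)‖ ≤ ‖A (x - xstar)‖ + ‖ζ‖ :=
  calc ‖A x - (A xstar + ζ)‖ = ‖A (x - xstar) - ζ‖ := by rw [map_sub, sub_add_eq_sub_sub]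
    _ ≤ ‖A (x - xstar)‖ + ‖ζ‖ := norm_sub_le _ _

theorem SatisfiesSREC.mul_norm_sub_le {A : 𝓕} {S : Set E} {γ δ : ℝ}
    (hSREC : SatisfiesSREC A S γ δ) {xstar : E} {ζ : F} {ε : ℝ} {xhat x : E}
    (hxhat : xhat ∈ S) (hx : x ∈ S) (hmin : ‖A xhat - (A xstar + ζ)‖ ≤ ‖A x - (A xstar + ζ)‖ + ε) :
    γ * ‖xhat - x‖ ≤ 2 * ‖A (x - xstar)‖ + 2 * ‖ζ‖ + ε + δ := by
  have hlower := hSREC xhat hxhat x hx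
  have hupper := norm_map_sub_le_of_misfit_le A hmin
  have hmisfit := norm_map_sub_sub_add_le A x xstar ζ
  linarith

end SREC

theorem srec_recovery_general
    {n m : ℕ} (A : EuclideanSpace ℝ (Fin n) →ₗ[ℝ] EuclideanSpace ℝ (Fin m))
    (S : Set (EuclideanSpace ℝ (Fin n)))
    (γ δ : ℝ) (hγ : 0 < γ)
    (hSREC : ∀ x₁ ∈ S, ∀ x₂ ∈ S, γ * ‖x₁ - x₂‖ - δ ≤ ‖A (x₁ - x₂)‖)
    (xstar : EuclideanSpace ℝ (Fin n)) (ζ : EuclideanSpace ℝ (Fin m))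
    (y : EuclideanSpace ℝ (Fin m)) (hy : y = A xstar + ζ)
    (ε : ℝ)
    (xhat : EuclideanSpace ℝ (Fin n)) (hxhat : xhat ∈ S)
    (hmin : ∀ x ∈ S, ‖A xhat - y‖ ≤ ‖A x - y‖ + ε) :
    (∀ x ∈ S, ‖xhat - x‖ ≤ (2 * ‖A (x - xstar)‖ + 2 * ‖ζ‖ + ε + δ) / γ) ∧
    (xstar ∈ S → ‖xhat - xstar‖ ≤ (2 * ‖ζ‖ + ε + δ) / γ) := by
  subst hy
  have hbound : ∀ x ∈ S, ‖xhat - x‖ ≤ (2 * ‖A (x - xstar)‖ + 2 * ‖ζ‖ + ε + δ) / γ :=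
    fun x hx => (le_div_iff₀' hγ).2 <|
      SatisfiesSREC.mul_norm_sub_le (A := A) hSREC hxhat hx (hmin x hx)
  refine ⟨hbound, fun hxstar => ?_⟩
  simpa using hbound xstar hxstar

/-- **Recovery under the set-restricted eigenvalue condition (S-REC).** Suppose the linear
map `A` satisfies S-REC(S, γ, δ), `y = A x* + ζ`, and `x̂ ∈ S` minimizes the misfit over
`S` up to additive `ε`. Then `‖x̂ − x‖ ≤ (2‖A(x − x*)‖ + 2‖ζ‖ + ε + δ)/γ` for every
`x ∈ S`; in particular if `x* ∈ S` then `‖x̂ − x*‖ ≤ (2‖ζ‖ + ε + δ)/γ`. -/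
theorem srec_recovery
    {n m : ℕ} (A : EuclideanSpace ℝ (Fin n) →ₗ[ℝ] EuclideanSpace ℝ (Fin m))
    (S : Set (EuclideanSpace ℝ (Fin n)))
    (γ δ : ℝ) (hγ : 0 < γ) (hδ : 0 ≤ δ)
    (hSREC : ∀ x₁ ∈ S, ∀ x₂ ∈ S, γ * ‖x₁ - x₂‖ - δ ≤ ‖A (x₁ - x₂)‖)
    (xstar : EuclideanSpace ℝ (Fin n)) (ζ : EuclideanSpace ℝ (Fin m))
    (y : EuclideanSpace ℝ (Fin m)) (hy : y = A xstar + ζ)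
    (ε : ℝ) (hε : 0 ≤ ε)
    (xhat : EuclideanSpace ℝ (Fin n)) (hxhat : xhat ∈ S)
    (hmin : ∀ x ∈ S, ‖A xhat - y‖ ≤ ‖A x - y‖ + ε) :
    (∀ x ∈ S, ‖xhat - x‖ ≤ (2 * ‖A (x - xstar)‖ + 2 * ‖ζ‖ + ε + δ) / γ) ∧
    (xstar ∈ S → ‖xhat - xstar‖ ≤ (2 * ‖ζ‖ + ε + δ) / γ) :=
  srec_recovery_general A S γ δ hγ hSREC xstar ζ y hy ε xhat hxhat hmin
end
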